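/- arXiv:1504.02300 — 5 statements merged into one kernel-verified Lean document; each statement's English description precedes it below -/
import Mathlib

section
/- The function f(β) = min_{i∈{1,…,N}} log₂(1 + (βᵢ P hᵢ)/(P hᵢ Σ_{l=i+1}^N β_l + σ²)) is quasi-concave on the simplex {β ∈ ℝ^N : βᵢ ≥ 0, Σβᵢ ≤ 1}, i.e., all its superlevel sets {β : f(β) ≥ t} are convex. -/
open Finset Real

lemma noma_aux (t num D : ℝ) (hnum : 0 ≤ num) (hD : 0 < D) :
    t ≤ Real.logb 2 (1 + num / D) ↔ ((2:ℝ) ^ t - 1) * D ≤ num := by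
  rw [Real.le_logb_iff_rpow_le one_lt_two (by positivity),
    ← sub_le_iff_le_add', le_div_iff₀ hD]

/-- quasi-concavity of the min-rate on the simplex: every
superlevel set of `β ↦ min_i R_i(β)` intersected with the simplex is convex. -/
theorem noma_maxmin_quasiconcave (N : ℕ) (hN : 1 ≤ N) (P σ2 : ℝ) (hP : 0 < P)
    (hσ : 0 < σ2) (h : Fin N → ℝ) (hh : ∀ i, 0 < h i) (t : ℝ) :
    Convex ℝ {β : Fin N → ℝ |
      (∀ i, 0 ≤ β i) ∧ (∑ i, β i) ≤ 1 ∧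
      t ≤ ⨅ i : Fin N, Real.logb 2
        (1 + β i * P * h i /
          (P * h i * (∑ l ∈ Finset.univ.filter (fun l => i < l), β l) + σ2))} := by
  haveI : Nonempty (Fin N) := ⟨⟨0, hN⟩⟩
  rintro x ⟨hx0, hx1, hx2⟩ y ⟨hy0, hy1, hy2⟩ a b ha hb hab
  simp only [Set.mem_setOf_eq, Pi.add_apply, Pi.smul_apply, smul_eq_mul]
  have hDx : ∀ i : Fin N,
      0 < P * h i * (∑ l ∈ Finset.univ.filter (fun l => i < l), x l) + σ2 := by
    intro i
    have : 0 ≤ ∑ l ∈ Finset.univ.filter (fun l => i < l), x l :=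
      Finset.sum_nonneg fun l _ => hx0 l
    have := hh i; positivity
  have hDy : ∀ i : Fin N,
      0 < P * h i * (∑ l ∈ Finset.univ.filter (fun l => i < l), y l) + σ2 := by
    intro i
    have : 0 ≤ ∑ l ∈ Finset.univ.filter (fun l => i < l), y l :=
      Finset.sum_nonneg fun l _ => hy0 l
    have := hh i; positivity
  have hz0 : ∀ i, 0 ≤ a * x i + b * y i := fun i => by
    have := hx0 i; have := hy0 i; nlinarith
  have hDz : ∀ i : Fin N,
      0 < P * h i * (∑ l ∈ Finset.univ.filter (fun l => i < l),
        (a * x l + b * y l)) + σ2 := by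
    intro i
    have : 0 ≤ ∑ l ∈ Finset.univ.filter (fun l => i < l), (a * x l + b * y l) :=
      Finset.sum_nonneg fun l _ => hz0 l
    have := hh i; positivity
  refine ⟨hz0, ?_, ?_⟩
  · have : ∑ i, (a * x i + b * y i) = a * ∑ i, x i + b * ∑ i, y i := by
      rw [Finset.sum_add_distrib, Finset.mul_sum, Finset.mul_sum]
    rw [this]; nlinarith
  · have key : ∀ (β : Fin N → ℝ), (∀ i, 0 ≤ β i) →
        ((t ≤ ⨅ i : Fin N, Real.logb 2
          (1 + β i * P * h i /
            (P * h i * (∑ l ∈ Finset.univ.filter (fun l => i < l), β l) + σ2)))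
        ↔ ∀ i : Fin N, ((2:ℝ) ^ t - 1) *
            (P * h i * (∑ l ∈ Finset.univ.filter (fun l => i < l), β l) + σ2)
            ≤ β i * P * h i) := by
      intro β hβ
      have hD : ∀ i : Fin N,
          0 < P * h i * (∑ l ∈ Finset.univ.filter (fun l => i < l), β l) + σ2 := by
        intro i
        have : 0 ≤ ∑ l ∈ Finset.univ.filter (fun l => i < l), β l :=
          Finset.sum_nonneg fun l _ => hβ l
        have := hh i; positivity
      rw [le_ciInf_iff (Set.Finite.bddBelow (Set.finite_range _))]
      refine forall_congr' fun i => noma_aux t _ _ ?_ (hD i)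
      have := hh i; have := hβ i; positivity
    rw [key _ hz0]
    have Hx := (key _ hx0).mp hx2
    have Hy := (key _ hy0).mp hy2
    intro i
    have Sx : ∑ l ∈ Finset.univ.filter (fun l => i < l), (a * x l + b * y l)
        = a * ∑ l ∈ Finset.univ.filter (fun l => i < l), x l
          + b * ∑ l ∈ Finset.univ.filter (fun l => i < l), y l := by
      rw [Finset.sum_add_distrib, Finset.mul_sum, Finset.mul_sum]
    have hxi := Hx i
    have hyi := Hy i
    rw [Sx]
    have hb' : b = 1 - a := by linarith
    subst hb'
    nlinarith [mul_le_mul_of_nonneg_left hxi ha, mul_le_mul_of_nonneg_left hyi hb]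
end

section
/- The vector β* given by the backward recursion βᵢ* = ((2^t−1)/(P hᵢ))(P hᵢ Σ_{l=i+1}^N β_l* + σ²) is the unique minimizer of Σᵢ βᵢ over the set {β ∈ ℝ^N : βᵢ ≥ 0, βᵢ P hᵢ ≥ (2^t−1)(P hᵢ Σ_{l=i+1}^N β_l + σ²) ∀ i}. -/
/-!
With `c = 2 ^ t - 1 ≥ 0` and `dᵢ = c σ² / (P hᵢ) ≥ 0`, feasibility reads
`βᵢ ≥ c ∑_{l > i} β_l + dᵢ`, and `β*` meets every one of these constraints with equality.
Splitting off the first coordinate, with tail sums `T` and `T*`,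
`∑ β ≥ (1 + c) T + d₀` while `∑ β* = (1 + c) T* + d₀`; since `1 + c ≥ 1`, induction on `N`
(the tails satisfy the same system) gives `T* ≤ T`, hence minimality, and in the case of
equal totals forces `T = T*` and `β₀ = β*₀`, hence uniqueness.
-/

open Finset Real

section AffineTailBound

variable {N : ℕ}

def affineTailBound (c d β : Fin N → ℝ) (i : Fin N) : ℝ := c i * ∑ l > i, β l + d i

theorem affineTailBound_zero (c d β : Fin (N + 1) → ℝ) :
    affineTailBound c d β 0 = c 0 * ∑ j, Fin.tail β j + d 0 := by
  simp [affineTailBound, Fin.tail]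

theorem affineTailBound_succ (c d β : Fin (N + 1) → ℝ) (i : Fin N) :
    affineTailBound c d β i.succ =
      affineTailBound (Fin.tail c) (Fin.tail d) (Fin.tail β) i := by
  simp [affineTailBound, Fin.tail]

theorem Fin.sum_univ_eq_add_sum_tail (β : Fin (N + 1) → ℝ) :
    ∑ i, β i = β 0 + ∑ j, Fin.tail β j :=
  Fin.sum_univ_succ β

variable {c d : Fin N → ℝ}

theorem nonneg_of_eq_affineTailBound (hc : ∀ i, 0 ≤ c i) (hd : ∀ i, 0 ≤ d i) {β : Fin N → ℝ}
    (hβ : ∀ i, β i = affineTailBound c d β i) (i : Fin N) : 0 ≤ β i := by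
  induction N with
  | zero => exact i.elim0
  | succ N ih =>
    have htail : ∀ j, 0 ≤ Fin.tail β j :=
      ih (c := Fin.tail c) (d := Fin.tail d) (fun j => hc _) (fun j => hd _)
        fun j => by rw [← affineTailBound_succ]; exact hβ j.succ
    cases i using Fin.cases with
    | zero =>
      rw [hβ, affineTailBound_zero]
      exact add_nonneg (mul_nonneg (hc 0) (sum_nonneg fun j _ => htail j)) (hd 0)
    | succ j => exact htail j

theorem sum_le_sum_of_eq_affineTailBound_of_le (hc : ∀ i, 0 ≤ c i) {β₀ β : Fin N → ℝ}
    (hβ₀ : ∀ i, β₀ i = affineTailBound c d β₀ i) (hβ : ∀ i, affineTailBound c d β i ≤ β i) :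
    ∑ i, β₀ i ≤ ∑ i, β i := by
  induction N with
  | zero => simp
  | succ N ih =>
    have htail : ∑ j, Fin.tail β₀ j ≤ ∑ j, Fin.tail β j :=
      ih (c := Fin.tail c) (d := Fin.tail d) (fun j => hc _)
        (fun j => by rw [← affineTailBound_succ]; exact hβ₀ j.succ)
        (fun j => by rw [← affineTailBound_succ]; exact hβ j.succ)
    have h₀ := hβ₀ 0
    have h := hβ 0
    rw [affineTailBound_zero] at h₀ h
    rw [Fin.sum_univ_eq_add_sum_tail, Fin.sum_univ_eq_add_sum_tail]
    nlinarith [mul_nonneg (hc 0) (sub_nonneg.2 htail)]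

theorem eq_of_sum_eq_of_eq_affineTailBound_of_le (hc : ∀ i, 0 ≤ c i) {β₀ β : Fin N → ℝ}
    (hβ₀ : ∀ i, β₀ i = affineTailBound c d β₀ i) (hβ : ∀ i, affineTailBound c d β i ≤ β i)
    (hsum : ∑ i, β i = ∑ i, β₀ i) : β = β₀ := by
  induction N with
  | zero => exact funext fun i => i.elim0
  | succ N ih =>
    have hβ₀' (j : Fin N) :
        Fin.tail β₀ j = affineTailBound (Fin.tail c) (Fin.tail d) (Fin.tail β₀) j := by
      rw [← affineTailBound_succ]; exact hβ₀ j.succ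
    have hβ' (j : Fin N) :
        affineTailBound (Fin.tail c) (Fin.tail d) (Fin.tail β) j ≤ Fin.tail β j := by
      rw [← affineTailBound_succ]; exact hβ j.succ
    have htail_le := sum_le_sum_of_eq_affineTailBound_of_le (fun j => hc _) hβ₀' hβ'
    have h₀ := hβ₀ 0
    have h := hβ 0
    rw [affineTailBound_zero] at h₀ h
    rw [Fin.sum_univ_eq_add_sum_tail, Fin.sum_univ_eq_add_sum_tail] at hsum
    have htail_eq : ∑ j, Fin.tail β j = ∑ j, Fin.tail β₀ j := by
      nlinarith [mul_nonneg (hc 0) (sub_nonneg.2 htail_le)]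
    have htail : Fin.tail β = Fin.tail β₀ := ih (fun j => hc _) hβ₀' hβ' htail_eq
    have hhead : β 0 = β₀ 0 := by linarith
    rw [← Fin.cons_self_tail β, ← Fin.cons_self_tail β₀, hhead, htail]

end AffineTailBound

theorem mul_add_le_mul_iff_add_div_le {a b c S s : ℝ} (ha : 0 < a) :
    c * (a * S + s) ≤ b * a ↔ c * S + c * s / a ≤ b := by
  rw [← div_le_iff₀ ha]
  field_simp

theorem noma_backward_recursion_unique_minimizer_general (N : ℕ)
    (P σ2 : ℝ) (hP : 0 < P) (hσ : 0 < σ2) (h : Fin N → ℝ) (hh : ∀ i, 0 < h i)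
    (t : ℝ) (ht : 0 < t)
    (F : Set (Fin N → ℝ))
    (hF : F = {β : Fin N → ℝ | ∀ i : Fin N, 0 ≤ β i ∧
      ((2 : ℝ) ^ t - 1) *
          (P * h i * (∑ l ∈ Finset.univ.filter (fun l => i < l), β l) + σ2) ≤
        β i * P * h i})
    (βs : Fin N → ℝ)
    (hrec : ∀ i : Fin N, βs i = ((2 : ℝ) ^ t - 1) / (P * h i) *
      (P * h i * (∑ l ∈ Finset.univ.filter (fun l => i < l), βs l) + σ2)) :
    βs ∈ F ∧ (∀ β ∈ F, (∑ i, βs i) ≤ ∑ i, β i) ∧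
    (∀ β ∈ F, (∑ i, β i) = (∑ i, βs i) → β = βs) := by
  have hc : 0 ≤ (2 : ℝ) ^ t - 1 := sub_nonneg.2 (one_le_rpow one_le_two ht.le)
  have hPh (i : Fin N) : 0 < P * h i := mul_pos hP (hh i)
  set c : Fin N → ℝ := fun _ => (2 : ℝ) ^ t - 1
  set d : Fin N → ℝ := fun i => ((2 : ℝ) ^ t - 1) * σ2 / (P * h i)
  have hd (i : Fin N) : 0 ≤ d i := div_nonneg (mul_nonneg hc hσ.le) (hPh i).le
  have hmem (β : Fin N → ℝ) : β ∈ F ↔ ∀ i, 0 ≤ β i ∧ affineTailBound c d β i ≤ β i := by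
    simp only [hF, Set.mem_ofPred_eq, filter_lt_eq_Ioi, mul_assoc (β _),
      mul_add_le_mul_iff_add_div_le (hPh _), affineTailBound, c, d]
  have hβs (i : Fin N) : βs i = affineTailBound c d βs i := by
    rw [hrec i, filter_lt_eq_Ioi, affineTailBound]
    simp only [c, d]
    field_simp [(hh i).ne']
  have hfeas (β) (hβ : β ∈ F) (i : Fin N) : affineTailBound c d β i ≤ β i := ((hmem β).1 hβ i).2
  refine ⟨(hmem βs).2 fun i => ⟨nonneg_of_eq_affineTailBound (fun _ => hc) hd hβs i, (hβs i).ge⟩,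
    fun β hβ => ?_, fun β hβ hsum => ?_⟩
  · exact sum_le_sum_of_eq_affineTailBound_of_le (fun _ => hc) hβs (hfeas β hβ)
  · exact eq_of_sum_eq_of_eq_affineTailBound_of_le (fun _ => hc) hβs (hfeas β hβ) hsum

/-- the vector produced by the backward recursion is the unique
minimizer of `∑ β i` over the LP feasible set. -/
theorem noma_backward_recursion_unique_minimizer (N : ℕ) (hN : 1 ≤ N)
    (P σ2 : ℝ) (hP : 0 < P) (hσ : 0 < σ2) (h : Fin N → ℝ) (hh : ∀ i, 0 < h i)
    (t : ℝ) (ht : 0 < t)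
    (F : Set (Fin N → ℝ))
    (hF : F = {β : Fin N → ℝ | ∀ i : Fin N, 0 ≤ β i ∧
      ((2 : ℝ) ^ t - 1) *
          (P * h i * (∑ l ∈ Finset.univ.filter (fun l => i < l), β l) + σ2) ≤
        β i * P * h i})
    (βs : Fin N → ℝ)
    (hrec : ∀ i : Fin N, βs i = ((2 : ℝ) ^ t - 1) / (P * h i) *
      (P * h i * (∑ l ∈ Finset.univ.filter (fun l => i < l), βs l) + σ2)) :
    βs ∈ F ∧ (∀ β ∈ F, (∑ i, βs i) ≤ ∑ i, β i) ∧
    (∀ β ∈ F, (∑ i, β i) = (∑ i, βs i) → β = βs) :=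
  noma_backward_recursion_unique_minimizer_general N P σ2 hP hσ h hh t ht F hF βs hrec
end

section
/- In the equal-channel case hᵢ = h, the optimal max-min rate t* of the NOMA power allocation problem (maximize t subject to existence of β ≥ 0 with Σβᵢ ≤ 1 and βᵢ P h ≥ (2^t−1)(Ph Σ_{l>i} β_l + σ²)) equals (1/N) log₂(1 + P h/σ²). -/
/-!
Write `x = 2^t` and `g = P h`. With `Tᵢ = g ∑_{l ≥ i} βₗ + σ²`, the rate constraint of user `i`
reads `x T_{i+1} ≤ Tᵢ`, so telescoping gives `x^N σ² ≤ T₀ ≤ g + σ²`, i.e.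
`t ≤ (1/N) log₂ (1 + g/σ²)`. Equality holds for the geometric allocation
`βᵢ = σ² (q - 1) q^(N-1-i) / g` with `q^N = 1 + g/σ²`, for which `Tᵢ = σ² q^(N-i)`.
-/

open Finset Real

section Telescoping

variable {g σ x : ℝ}

theorem pow_mul_le_of_forall_rate_constraint (hx : 0 ≤ x) :
    ∀ {N : ℕ} (β : Fin N → ℝ),
      (∀ i, (x - 1) * (g * ∑ l ∈ Ioi i, β l + σ) ≤ β i * g) →
      x ^ N * σ ≤ g * ∑ i, β i + σ
  | 0, _, _ => by simp
  | n + 1, β, hβ => by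
    have htail : x ^ n * σ ≤ g * ∑ l : Fin n, β l.succ + σ :=
      pow_mul_le_of_forall_rate_constraint hx _ fun i => by
        simpa only [Fin.sum_Ioi_succ] using hβ i.succ
    have hhead := hβ 0
    rw [Fin.sum_Ioi_zero] at hhead
    calc x ^ (n + 1) * σ = x * (x ^ n * σ) := by ring
      _ ≤ x * (g * ∑ l : Fin n, β l.succ + σ) := mul_le_mul_of_nonneg_left htail hx
      _ ≤ g * ∑ i, β i + σ := by rw [Fin.sum_univ_succ]; linarith

end Telescoping

section GeometricAllocation

noncomputable def geomAlloc (g σ q : ℝ) (N : ℕ) (i : Fin N) : ℝ :=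
  σ * (q - 1) / g * q ^ (N - 1 - i)

variable {g σ q : ℝ}

theorem geomAlloc_succ (n : ℕ) (i : Fin n) :
    geomAlloc g σ q (n + 1) i.succ = geomAlloc g σ q n i := by
  simp only [geomAlloc, Fin.val_succ]
  congr 2
  omega

theorem geomAlloc_zero (n : ℕ) : geomAlloc g σ q (n + 1) 0 = σ * (q - 1) / g * q ^ n := by
  simp [geomAlloc]

theorem geomAlloc_nonneg (hg : 0 ≤ g) (hσ : 0 ≤ σ) (hq : 1 ≤ q) (N : ℕ) (i : Fin N) :
    0 ≤ geomAlloc g σ q N i := by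
  unfold geomAlloc
  have : 0 ≤ q - 1 := by linarith
  positivity

theorem mul_sum_geomAlloc_add (hg : g ≠ 0) :
    ∀ N : ℕ, g * ∑ i, geomAlloc g σ q N i + σ = q ^ N * σ
  | 0 => by simp
  | n + 1 => by
    have hhead : g * geomAlloc g σ q (n + 1) 0 = σ * (q - 1) * q ^ n := by
      rw [geomAlloc_zero]; field_simp
    rw [Fin.sum_univ_succ]
    simp only [geomAlloc_succ]
    linear_combination hhead + mul_sum_geomAlloc_add hg n

theorem geomAlloc_rate_constraint (hg : g ≠ 0) :
    ∀ {N : ℕ} (i : Fin N),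
      (q - 1) * (g * ∑ l ∈ Ioi i, geomAlloc g σ q N l + σ) = geomAlloc g σ q N i * g
  | n + 1, i => by
    cases i using Fin.cases with
    | zero =>
      rw [Fin.sum_Ioi_zero]
      simp only [geomAlloc_succ]
      rw [mul_sum_geomAlloc_add hg, geomAlloc_zero]
      field_simp
    | succ j =>
      rw [Fin.sum_Ioi_succ]
      simp only [geomAlloc_succ]
      exact geomAlloc_rate_constraint hg j

end GeometricAllocation

theorem rpow_one_div_mul_logb_pow {b A : ℝ} (hb : 0 < b) (hb1 : b ≠ 1) (hA : 0 < A) {N : ℕ}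
    (hN : N ≠ 0) : (b ^ (1 / (N : ℝ) * logb b A)) ^ N = A := by
  rw [← rpow_natCast, ← rpow_mul hb.le, one_div_mul_eq_div, div_mul_cancel₀ _ (by positivity),
    rpow_logb hb hb1 hA]

theorem le_one_div_mul_logb_of_rpow_pow_le {b A t : ℝ} (hb : 1 < b) (hA : 0 < A) {N : ℕ}
    (hN : 0 < N) (h : (b ^ t) ^ N ≤ A) : t ≤ 1 / (N : ℝ) * logb b A := by
  rw [← rpow_natCast, ← rpow_mul (by positivity), ← le_logb_iff_rpow_le hb hA] at h
  rw [one_div_mul_eq_div, le_div_iff₀ (by positivity)]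
  exact h

/-- with equal channels, the optimal max-min rate equals
`(1/N) log₂(1 + Ph/σ²)`. -/
theorem noma_maxmin_equal_channels (N : ℕ) (hN : 1 ≤ N) (P σ2 h : ℝ)
    (hP : 0 < P) (hσ : 0 < σ2) (hh : 0 < h) :
    IsGreatest {t : ℝ | ∃ β : Fin N → ℝ, (∀ i, 0 ≤ β i) ∧ (∑ i, β i) ≤ 1 ∧
        ∀ i : Fin N,
          ((2 : ℝ) ^ t - 1) *
              (P * h * (∑ l ∈ Finset.univ.filter (fun l => i < l), β l) + σ2) ≤
            β i * P * h}
      ((1 / (N : ℝ)) * Real.logb 2 (1 + P * h / σ2)) := by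
  have hg : 0 < P * h := mul_pos hP hh
  have hA : 0 < 1 + P * h / σ2 := by positivity
  have hAσ : (1 + P * h / σ2) * σ2 = P * h + σ2 := by field_simp; ring
  simp only [filter_lt_eq_Ioi, mul_assoc _ P h]
  constructor
  · set q := (2 : ℝ) ^ (1 / (N : ℝ) * logb 2 (1 + P * h / σ2))
    have hqN : q ^ N = 1 + P * h / σ2 :=
      rpow_one_div_mul_logb_pow two_pos (by norm_num) hA (by omega)
    have hq : 1 ≤ q := by
      refine (one_le_pow_iff_of_nonneg (by positivity) (by omega : N ≠ 0)).mp ?_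
      rw [hqN]; linarith [div_pos hg hσ]
    refine ⟨geomAlloc (P * h) σ2 q N, geomAlloc_nonneg hg.le hσ.le hq N, ?_,
      fun i => (geomAlloc_rate_constraint hg.ne' i).le⟩
    have hsum := mul_sum_geomAlloc_add (σ := σ2) (q := q) hg.ne' N
    rw [hqN, hAσ] at hsum
    exact (mul_left_cancel₀ hg.ne' (by linarith : P * h * _ = P * h * 1)).le
  · rintro t ⟨β, -, hsum, hβ⟩
    refine le_one_div_mul_logb_of_rpow_pow_le one_lt_two hA hN ?_
    have htelescope := pow_mul_le_of_forall_rate_constraint (by positivity) β hβ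
    refine le_of_mul_le_mul_right ?_ hσ
    rw [hAσ]
    linarith [mul_le_mul_of_nonneg_left hsum hg.le]
end

section
/- The map t ↦ Σᵢ βᵢ(t), where β(t) is defined by the backward recursion βᵢ(t) = ((2^t−1)/(P hᵢ))(P hᵢ Σ_{l=i+1}^N β_l(t) + σ²), is strictly increasing and continuous in t on (0, ∞), with limit 0 as t → 0⁺. -/
/-!
By backward induction on the user index, each `βᵢ` is the product of the rate factor
`(2^t - 1)/(P hᵢ)`, which is strictly increasing, continuous and vanishes at `t = 0`, with the
received load `P hᵢ Σ_{l>i} β_l + σ²`, which by induction is monotone, continuous and at least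
`σ² > 0`. Such a product is again strictly increasing, continuous and tends to `0`, and so is
the sum over the users.
-/

open Finset Real Filter

open Set Topology

structure RisesFromZero (f : ℝ → ℝ) : Prop where
  monotoneOn : MonotoneOn f (Ioi 0)
  continuousOn : ContinuousOn f (Ioi 0)
  tendsto : Tendsto f (𝓝[>] 0) (𝓝 0)

namespace RisesFromZero

variable {f g : ℝ → ℝ}

theorem nonneg (hf : RisesFromZero f) {t : ℝ} (ht : 0 < t) : 0 ≤ f t :=
  le_of_tendsto hf.tendsto <| eventually_of_mem (Ioo_mem_nhdsGT ht) fun _ hs =>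
    hf.monotoneOn hs.1 ht hs.2.le

theorem congr (hf : RisesFromZero f) (hfg : EqOn f g (Ioi 0)) : RisesFromZero g where
  monotoneOn := hf.monotoneOn.congr hfg
  continuousOn := hf.continuousOn.congr hfg.symm
  tendsto := hf.tendsto.congr' (eventuallyEq_nhdsWithin_of_eqOn hfg)

theorem finset_sum {ι : Type*} (s : Finset ι) {f : ι → ℝ → ℝ}
    (hf : ∀ i ∈ s, RisesFromZero (f i)) : RisesFromZero fun t => ∑ i ∈ s, f i t where
  monotoneOn _ ha _ hb hab := sum_le_sum fun i hi => (hf i hi).monotoneOn ha hb hab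
  continuousOn := continuousOn_finsetSum s fun i hi => (hf i hi).continuousOn
  tendsto := by simpa using tendsto_finsetSum s fun i hi => (hf i hi).tendsto

theorem mul (hf : RisesFromZero f) (hg : MonotoneOn g (Ioi 0)) (hgc : ContinuousOn g (Ioi 0))
    {a : ℝ} (hga : Tendsto g (𝓝[>] 0) (𝓝 a)) (hg₀ : ∀ t > 0, 0 ≤ g t) :
    RisesFromZero fun t => f t * g t where
  monotoneOn _ ha _ hb hab :=
    mul_le_mul (hf.monotoneOn ha hb hab) (hg ha hb hab) (hg₀ _ ha) (hf.nonneg hb)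
  continuousOn := hf.continuousOn.mul hgc
  tendsto := by simpa using hf.tendsto.mul hga

end RisesFromZero

theorem StrictMonoOn.mul_monotoneOn_of_pos {s : Set ℝ} {f g : ℝ → ℝ} (hf : StrictMonoOn f s)
    (hg : MonotoneOn g s) (hf₀ : ∀ x ∈ s, 0 ≤ f x) (hg₀ : ∀ x ∈ s, 0 < g x) :
    StrictMonoOn (fun x => f x * g x) s := fun _ ha _ hb hab =>
  mul_lt_mul (hf ha hb hab) (hg ha hb hab.le) (hg₀ _ ha) (hf₀ _ hb)

theorem strictMono_two_rpow_sub_one_div {c : ℝ} (hc : 0 < c) :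
    StrictMono fun t : ℝ => ((2 : ℝ) ^ t - 1) / c := fun _ _ hst =>
  div_lt_div_of_pos_right (sub_lt_sub_right (rpow_lt_rpow_of_exponent_lt one_lt_two hst) 1) hc

theorem continuous_two_rpow_sub_one_div (c : ℝ) :
    Continuous fun t : ℝ => ((2 : ℝ) ^ t - 1) / c :=
  ((continuous_const_rpow two_ne_zero).sub continuous_const).div_const c

theorem risesFromZero_two_rpow_sub_one_div {c : ℝ} (hc : 0 < c) :
    RisesFromZero fun t : ℝ => ((2 : ℝ) ^ t - 1) / c where
  monotoneOn := (strictMono_two_rpow_sub_one_div hc).monotone.monotoneOn _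
  continuousOn := (continuous_two_rpow_sub_one_div c).continuousOn
  tendsto := by
    simpa using
      (continuous_two_rpow_sub_one_div c).continuousWithinAt.tendsto (x := 0) (s := Ioi 0)

/-- The power share `β` that gives a user of effective gain `c = P h` the rate `t` (in bits)
against interference share `S` and noise `σ2`: the solution of `c β / (c S + σ2) = 2^t - 1`. -/
noncomputable def powerForRate (c σ2 t S : ℝ) : ℝ := ((2 : ℝ) ^ t - 1) / c * (c * S + σ2)

section PowerForRate

variable {c σ2 : ℝ} {S : ℝ → ℝ}

theorem monotoneOn_load (hc : 0 ≤ c) (hS : RisesFromZero S) :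
    MonotoneOn (fun t => c * S t + σ2) (Ioi 0) := fun _ ha _ hb hab => by
  dsimp only
  gcongr
  exact hS.monotoneOn ha hb hab

theorem strictMonoOn_powerForRate (hc : 0 < c) (hσ : 0 < σ2) (hS : RisesFromZero S) :
    StrictMonoOn (fun t => powerForRate c σ2 t (S t)) (Ioi 0) := by
  have hload_pos : ∀ t ∈ Ioi (0 : ℝ), 0 < c * S t + σ2 := fun t ht => by
    have := hS.nonneg ht
    positivity
  exact ((strictMono_two_rpow_sub_one_div hc).strictMonoOn _).mul_monotoneOn_of_pos
    (monotoneOn_load hc.le hS) (fun _ => (risesFromZero_two_rpow_sub_one_div hc).nonneg) hload_pos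

theorem risesFromZero_powerForRate (hc : 0 < c) (hσ : 0 ≤ σ2) (hS : RisesFromZero S) :
    RisesFromZero fun t => powerForRate c σ2 t (S t) :=
  (risesFromZero_two_rpow_sub_one_div hc).mul (monotoneOn_load hc.le hS)
    ((continuousOn_const.mul hS.continuousOn).add continuousOn_const)
    ((tendsto_const_nhds.mul hS.tendsto).add tendsto_const_nhds)
    fun t ht => by
      have := hS.nonneg ht
      positivity

end PowerForRate

theorem strictMonoOn_and_risesFromZero_of_noma_recursion {N : ℕ} {P σ2 : ℝ} (hP : 0 < P)
    (hσ : 0 < σ2) {h : Fin N → ℝ} (hh : ∀ i, 0 < h i) {B : ℝ → Fin N → ℝ}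
    (hrec : ∀ t > (0 : ℝ), ∀ i : Fin N,
      B t i = powerForRate (P * h i) σ2 t (∑ l ∈ univ.filter (i < ·), B t l))
    (i : Fin N) : StrictMonoOn (B · i) (Ioi 0) ∧ RisesFromZero (B · i) := by
  induction i using WellFoundedGT.induction with
  | _ i ih =>
    have hS := RisesFromZero.finset_sum (univ.filter (i < ·)) fun l hl =>
      (ih l (mem_filter.1 hl).2).2
    have hc := mul_pos hP (hh i)
    have hB : EqOn (fun t => powerForRate (P * h i) σ2 t _) (B · i) (Ioi 0) :=
      fun t ht => (hrec t ht i).symm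
    exact ⟨(strictMonoOn_powerForRate hc hσ hS).congr hB,
      (risesFromZero_powerForRate hc hσ.le hS).congr hB⟩

/-- `t ↦ ∑ᵢ βᵢ(t)`, with `β(t)` given by the backward recursion,
is strictly increasing and continuous on `(0,∞)` and tends to `0` as `t → 0⁺`. -/
theorem noma_total_power_strict_mono (N : ℕ) (hN : 1 ≤ N) (P σ2 : ℝ)
    (hP : 0 < P) (hσ : 0 < σ2) (h : Fin N → ℝ) (hh : ∀ i, 0 < h i)
    (B : ℝ → Fin N → ℝ)
    (hrec : ∀ t > (0 : ℝ), ∀ i : Fin N,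
      B t i = ((2 : ℝ) ^ t - 1) / (P * h i) *
        (P * h i * (∑ l ∈ Finset.univ.filter (fun l => i < l), B t l) + σ2)) :
    StrictMonoOn (fun t => ∑ i, B t i) (Set.Ioi (0 : ℝ)) ∧
    ContinuousOn (fun t => ∑ i, B t i) (Set.Ioi (0 : ℝ)) ∧
    Tendsto (fun t => ∑ i, B t i) (nhdsWithin 0 (Set.Ioi (0 : ℝ)))
      (nhds 0) := by
  have hB := strictMonoOn_and_risesFromZero_of_noma_recursion hP hσ hh hrec
  have hsum := RisesFromZero.finset_sum univ fun i _ => (hB i).2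
  have : Nonempty (Fin N) := ⟨⟨0, hN⟩⟩
  exact ⟨fun _ hs _ ht hst => sum_lt_sum_of_nonempty univ_nonempty fun i _ =>
    (hB i).1 hs ht hst, hsum.continuousOn, hsum.tendsto⟩
end

section
/- The function P ↦ r*(P), where r*(P) = sup{t ≥ 0 : Σᵢ βᵢ(t) ≤ 1 for β(t) given by the backward recursion βᵢ(t) = ((2^t−1)/(P hᵢ))(P hᵢ Σ_{l>i} β_l(t) + σ²)}, is non-decreasing in P > 0. -/
open Finset Real

/-!
For `t > 0` the recursion reads `β = c (Σ_{l>i} β_l + σ²/(P hᵢ))` with `c = 2^t - 1 > 0`,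
and its solution is pointwise monotone in the offsets `σ²/(P hᵢ)`. These offsets decrease as
`P` grows, so every positive rate feasible at `P₁` stays feasible at `P₂ ≥ P₁`. The feasible set
at `P₂` is bounded, since `β_i ≥ (2^t - 1) σ²/(P hᵢ)` forces `2^t` to be bounded, and its
elements are nonnegative, so its supremum dominates both these rates and `0`.
-/

def SolvesBackwardRecursion {ι : Type*} [Fintype ι] [LinearOrder ι]
    (c : ℝ) (a x : ι → ℝ) : Prop :=
  ∀ i, x i = c * (∑ l ∈ univ.filter (fun l => i < l), x l + a i)

namespace SolvesBackwardRecursion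

variable {ι : Type*} [Fintype ι] [LinearOrder ι] {c : ℝ} {a b x y : ι → ℝ}

theorem le (hc : 0 ≤ c) (hab : a ≤ b) (hx : SolvesBackwardRecursion c a x)
    (hy : SolvesBackwardRecursion c b y) : x ≤ y := by
  intro i
  induction i using WellFoundedGT.induction with
  | _ i ih =>
    rw [hx i, hy i]
    gcongr with l hl
    · exact ih l (mem_filter.mp hl).2
    · exact hab i

theorem nonneg (hc : 0 ≤ c) (ha : 0 ≤ a) (hx : SolvesBackwardRecursion c a x) : 0 ≤ x :=
  le hc ha (fun _ => by simp) hx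

theorem mul_le (hc : 0 ≤ c) (ha : 0 ≤ a) (hx : SolvesBackwardRecursion c a x) (i : ι) :
    c * a i ≤ x i := by
  rw [hx i]
  exact mul_le_mul_of_nonneg_left
    (le_add_of_nonneg_left (sum_nonneg fun l _ => hx.nonneg hc ha l)) hc

theorem of_div_mul {p : ι → ℝ} {s : ℝ} (hp : ∀ i, p i ≠ 0)
    (hx : ∀ i, x i = c / p i * (p i * ∑ l ∈ univ.filter (fun l => i < l), x l + s)) :
    SolvesBackwardRecursion c (fun i => s / p i) x := by
  intro i
  have hpi := hp i
  rw [hx i]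
  field_simp

end SolvesBackwardRecursion

theorem bddAbove_setOf_le_one_of_two_rpow_sub_one_mul_le {f : ℝ → ℝ} {d : ℝ} (hd : 0 < d)
    (hf : ∀ t > 0, (2 ^ t - 1) * d ≤ f t) : BddAbove {t : ℝ | 0 ≤ t ∧ f t ≤ 1} := by
  refine ⟨logb 2 (1 + 1 / d), fun t ⟨ht, hft⟩ => ?_⟩
  rw [le_logb_iff_rpow_le one_lt_two (by positivity)]
  rcases ht.eq_or_lt with rfl | htpos
  · simp [hd.le]
  · rw [← sub_le_iff_le_add', le_div_iff₀ hd]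
    exact (hf t htpos).trans hft

/-- the optimal max-min fairness rate `r*(P)` is non-decreasing
in the power budget `P > 0`. `B P t` is the power allocation given by the
backward recursion at budget `P` and rate `t`. -/
theorem noma_maxmin_rate_monotone_in_power (N : ℕ) (hN : 1 ≤ N) (σ2 : ℝ)
    (hσ : 0 < σ2) (h : Fin N → ℝ) (hh : ∀ i, 0 < h i)
    (B : ℝ → ℝ → Fin N → ℝ)
    (hrec : ∀ P > (0 : ℝ), ∀ t > (0 : ℝ), ∀ i : Fin N,
      B P t i = ((2 : ℝ) ^ t - 1) / (P * h i) *
        (P * h i * (∑ l ∈ Finset.univ.filter (fun l => i < l), B P t l) + σ2))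
    (rstar : ℝ → ℝ)
    (hrstar : ∀ P > (0 : ℝ),
      rstar P = sSup {t : ℝ | 0 ≤ t ∧ (∑ i, B P t i) ≤ 1}) :
    ∀ P₁ P₂ : ℝ, 0 < P₁ → P₁ ≤ P₂ → rstar P₁ ≤ rstar P₂ := by
  intro P₁ P₂ hP₁ hP₁₂
  have hP₂ : 0 < P₂ := hP₁.trans_le hP₁₂
  have hc : ∀ t > (0 : ℝ), 0 ≤ (2 : ℝ) ^ t - 1 := fun t ht =>
    sub_nonneg.mpr (one_le_rpow one_le_two ht.le)
  have hoff : ∀ P > (0 : ℝ), 0 ≤ fun i => σ2 / (P * h i) := fun P hP i =>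
    div_nonneg hσ.le (mul_pos hP (hh i)).le
  have hsolves : ∀ P > (0 : ℝ), ∀ t > (0 : ℝ),
      SolvesBackwardRecursion (2 ^ t - 1) (fun i => σ2 / (P * h i)) (B P t) := fun P hP t ht =>
    .of_div_mul (fun i => (mul_pos hP (hh i)).ne') (hrec P hP t ht)
  have hbdd : BddAbove {t : ℝ | 0 ≤ t ∧ (∑ i, B P₂ t i) ≤ 1} := by
    let i₀ : Fin N := ⟨0, hN⟩
    refine bddAbove_setOf_le_one_of_two_rpow_sub_one_mul_le
      (div_pos hσ (mul_pos hP₂ (hh i₀))) fun t ht => ?_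
    have hnonneg := (hsolves P₂ hP₂ t ht).nonneg (hc t ht) (hoff P₂ hP₂)
    exact ((hsolves P₂ hP₂ t ht).mul_le (hc t ht) (hoff P₂ hP₂) i₀).trans
      (single_le_sum (fun i _ => hnonneg i) (mem_univ i₀))
  rw [hrstar P₁ hP₁, hrstar P₂ hP₂]
  have hsup₂ : 0 ≤ sSup {t : ℝ | 0 ≤ t ∧ (∑ i, B P₂ t i) ≤ 1} := Real.sSup_nonneg fun t ht => ht.1
  refine Real.sSup_le (fun t ⟨ht, hfeas⟩ => ?_) hsup₂
  rcases ht.eq_or_lt with rfl | htpos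
  · exact hsup₂
  · have hle := (hsolves P₂ hP₂ t htpos).le (hc t htpos)
      (fun i => div_le_div_of_nonneg_left hσ.le (mul_pos hP₁ (hh i))
        (mul_le_mul_of_nonneg_right hP₁₂ (hh i).le)) (hsolves P₁ hP₁ t htpos)
    exact le_csSup hbdd ⟨ht, (sum_le_sum fun i _ => hle i).trans hfeas⟩
end
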